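/- arXiv:1409.6134 — 3 statements merged into one kernel-verified Lean document; each statement's English description precedes it below -/
import Mathlib

section
/- Let (X,μ) be a standard probability space and ρ a measurable semimetric on (X,μ). Then ρ is admissible (i.e., separable on some subset of full measure) if and only if ℍ_ε(X,μ,ρ) < +∞ for every ε > 0. -/
open MeasureTheory Filter Set
open scoped ENNReal

/-- A semimetric on a set: symmetric, nonnegative, vanishing on the diagonal,
satisfying the triangle inequality. -/
structure IsSemimetric {Y : Type*} (ρ : Y → Y → ℝ) : Prop where
  refl : ∀ x, ρ x x = 0
  symm : ∀ x y, ρ x y = ρ y x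
  nonneg : ∀ x y, 0 ≤ ρ x y
  triangle : ∀ x y z, ρ x z ≤ ρ x y + ρ y z

/-- `ρ` is separable on the set `s`: some countable subset of `s` is `ρ`-dense in `s`. -/
def SeparableWRT {Y : Type*} (ρ : Y → Y → ℝ) (s : Set Y) : Prop :=
  ∃ D : Set Y, D.Countable ∧ D ⊆ s ∧ ∀ x ∈ s, ∀ ε : ℝ, 0 < ε → ∃ y ∈ D, ρ x y < ε

variable {X : Type*} [MeasurableSpace X]

/-- A semimetric is admissible if it is separable on a measurable subset of full measure. -/
def IsAdmissible (μ : Measure X) (ρ : X → X → ℝ) : Prop :=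
  ∃ s : Set X, MeasurableSet s ∧ μ sᶜ = 0 ∧ SeparableWRT ρ s

/-- There is a partition `X₀, X₁, …, X_k` of `X` into measurable pieces with `μ X₀ < ε`
and the `ρ`-diameter of `X_j` (1 ≤ j ≤ k) less than `ε`. -/
def IsEntropyPartition (μ : Measure X) (ρ : X → X → ℝ) (ε : ℝ) (k : ℕ) : Prop :=
  ∃ P : Fin (k + 1) → Set X,
    (∀ j, MeasurableSet (P j)) ∧
    Pairwise (fun i j => Disjoint (P i) (P j)) ∧
    (⋃ j, P j) = Set.univ ∧
    μ (P 0) < ENNReal.ofReal ε ∧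
    ∀ j, j ≠ 0 → ∀ x ∈ P j, ∀ y ∈ P j, ρ x y < ε

open scoped Classical in
/-- The Kolmogorov ε-entropy `ℍ_ε(X, μ, ρ)` of a semimetric triple: `log₂ k` for the least
`k` admitting an entropy partition, and `∞` if there is none. -/
noncomputable def epsEntropy (μ : Measure X) (ρ : X → X → ℝ) (ε : ℝ) : ℝ≥0∞ :=
  if h : ∃ k, IsEntropyPartition μ ρ ε k
  then ENNReal.ofReal (Real.logb 2 (Nat.find h))
  else ⊤

/-- The shift `T^k ρ` of a semimetric by the `k`-th power (k ∈ ℤ) of an automorphism. -/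
def shiftSemimetric (T : Equiv.Perm X) (k : ℤ) (ρ : X → X → ℝ) : X → X → ℝ :=
  fun x y => ρ ((T ^ k) x) ((T ^ k) y)

/-- The average `T^n_av ρ = (1/n) ∑_{k=0}^{n-1} T^k ρ`. -/
noncomputable def avgSemimetric (T : Equiv.Perm X) (ρ : X → X → ℝ) (n : ℕ) : X → X → ℝ :=
  fun x y => (∑ k ∈ Finset.range n, ρ ((T ^ k) x) ((T ^ k) y)) / n

/-- `h` is a scaling sequence for the semimetric `ρ` w.r.t. the automorphism `T`:
`h` is positive, for every `ε > 0` the sequence `ℍ_ε(X, μ, T^n_av ρ)/h_n` has finite limsup,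
and for all sufficiently small `ε > 0` it has positive liminf. Sequences are indexed by
`n = 1, 2, …`. -/
def IsScalingSeq (μ : Measure X) (T : Equiv.Perm X) (ρ : X → X → ℝ) (h : ℕ → ℝ) : Prop :=
  (∀ n, 1 ≤ n → 0 < h n) ∧
  (∀ ε : ℝ, 0 < ε →
    Filter.limsup (fun n : ℕ =>
      epsEntropy μ (avgSemimetric T ρ n) ε / ENNReal.ofReal (h n)) Filter.atTop < ⊤) ∧
  (∃ ε₀ : ℝ, 0 < ε₀ ∧ ∀ ε : ℝ, 0 < ε → ε < ε₀ →
    0 < Filter.liminf (fun n : ℕ =>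
      epsEntropy μ (avgSemimetric T ρ n) ε / ENNReal.ofReal (h n)) Filter.atTop)

/-- `ρ` is (two-sided) generating for `(X, μ, T)`: the shifts `T^k ρ`, `k ∈ ℤ`, separate points
of a subset of full measure. -/
def IsGenerating (μ : Measure X) (T : Equiv.Perm X) (ρ : X → X → ℝ) : Prop :=
  ∃ s : Set X, MeasurableSet s ∧ μ sᶜ = 0 ∧
    ∀ x ∈ s, ∀ y ∈ s, x ≠ y → ∃ k : ℤ, 0 < ρ ((T ^ k) x) ((T ^ k) y)

/-- `h` is a scaling entropy sequence of the system `(X, μ, T)`: it is a scaling sequence for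
some summable admissible measurable generating semimetric. -/
def IsScalingEntropySeq (μ : Measure X) (T : Equiv.Perm X) (h : ℕ → ℝ) : Prop :=
  ∃ ρ : X → X → ℝ, IsSemimetric ρ ∧
    Measurable (fun p : X × X => ρ p.1 p.2) ∧
    MeasureTheory.Integrable (fun p : X × X => ρ p.1 p.2) (μ.prod μ) ∧
    IsAdmissible μ ρ ∧ IsGenerating μ T ρ ∧ IsScalingSeq μ T ρ h

/-- The (Shannon) entropy, base 2, of the countable partition of `X` into the fibers of `f`. -/
noncomputable def partitionEntropy {ι : Type*} [Countable ι] (μ : Measure X) (f : X → ι) :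
    ℝ≥0∞ :=
  ∑' i : ι, ENNReal.ofReal (-((μ (f ⁻¹' {i})).toReal * Real.logb 2 (μ (f ⁻¹' {i})).toReal))

/-- The Kolmogorov (measure-theoretic) entropy of the automorphism `T`: the supremum over all
finite measurable partitions `ξ` of `lim_n H(ξ ∨ T⁻¹ξ ∨ ⋯ ∨ T^{-(n-1)}ξ)/n`. -/
noncomputable def kolmogorovEntropy (μ : Measure X) (T : Equiv.Perm X) : ℝ≥0∞ :=
  ⨆ (m : ℕ) (ξ : X → Fin m) (_ : ∀ i, MeasurableSet (ξ ⁻¹' {i})),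
    Filter.limsup (fun n : ℕ =>
      partitionEntropy μ (fun x => fun i : Fin n => ξ ((T ^ (-(i : ℤ))) x)) / (n : ℝ≥0∞))
      Filter.atTop

/-- The Kushnirenko `A`-entropy of `T` along the sequence `A = {a_n}`: the supremum over all
countable measurable partitions `ξ` of finite entropy of
`limsup_n H(T^{a_1}ξ ∨ ⋯ ∨ T^{a_n}ξ)/n`. -/
noncomputable def kushnirenkoEntropy (μ : Measure X) (T : Equiv.Perm X) (a : ℕ → ℕ) : ℝ≥0∞ :=
  ⨆ (ξ : X → ℕ) (_ : ∀ i, MeasurableSet (ξ ⁻¹' {i})) (_ : partitionEntropy μ ξ < ⊤),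
    Filter.limsup (fun n : ℕ =>
      partitionEntropy μ (fun x => fun i : Fin n => ξ ((T ^ (a i)) x)) / (n : ℝ≥0∞))
      Filter.atTop

/-- The Koopman operator `f ↦ f ∘ T` on `L²(X, μ)` has purely point spectrum: `L²(X, μ)`
possesses an orthonormal (Hilbert) basis consisting of eigenfunctions of `f ↦ f ∘ T`. -/
def HasPurePointSpectrum (μ : Measure X) (T : X → X) : Prop :=
  ∃ (ι : Type) (b : HilbertBasis ι ℂ (MeasureTheory.Lp ℂ 2 μ)),
    ∀ i : ι, ∃ c : ℂ, (fun x => (b i : MeasureTheory.Lp ℂ 2 μ) (T x))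
      =ᵐ[μ] fun x => c * (b i : MeasureTheory.Lp ℂ 2 μ) x

/-! Forward direction: the `ε/2`-balls around the points of a countable dense set cover a set of
full measure, so finitely many of them already cover `X` up to measure `ε`; disjointing them gives
an entropy partition. Backward direction: take entropy partitions for `ε = 2⁻ⁿ`. By Borel–Cantelli
almost every point lies outside the exceptional piece for all large `n`, hence in pieces of
arbitrarily small diameter; choosing one point of the full-measure set in each of these countably
many pieces gives a dense set. -/

open Topology

section EntropyPartition

variable {X : Type*} [MeasurableSpace X] {μ : Measure X} {ρ : X → X → ℝ} {ε : ℝ}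

theorem epsEntropy_lt_top_iff : epsEntropy μ ρ ε < ⊤ ↔ ∃ k, IsEntropyPartition μ ρ ε k := by
  unfold epsEntropy
  split_ifs with h <;> simp [h]

theorem isEntropyPartition_of_cover {k : ℕ} {C : ℕ → Set X} (hC : ∀ j, MeasurableSet (C j))
    (hcover : ∀ x, ∃ j ≤ k, x ∈ C j) (hC₀ : μ (C 0) < ENNReal.ofReal ε)
    (hdiam : ∀ j ≠ 0, ∀ x ∈ C j, ∀ y ∈ C j, ρ x y < ε) : IsEntropyPartition μ ρ ε k := by
  refine ⟨fun j => disjointed C j, fun j => MeasurableSet.disjointed hC j,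
    (disjoint_disjointed C).comp_of_injective Fin.val_injective, ?_, ?_, ?_⟩
  · refine eq_univ_of_forall fun x => ?_
    obtain ⟨j, hjk, hx⟩ := hcover x
    have : x ∈ ⋃ i ∈ Finset.Iic k, disjointed C i := by
      rw [biUnion_Iic_disjointed]
      exact le_partialSups_of_le C hjk hx
    obtain ⟨i, hi, hxi⟩ := mem_iUnion₂.1 this
    exact mem_iUnion.2 ⟨⟨i, Nat.lt_succ_of_le (Finset.mem_Iic.1 hi)⟩, hxi⟩
  · simpa [disjointed_zero] using hC₀
  · intro j hj x hx y hy
    exact hdiam j (Fin.val_ne_zero_iff.2 hj) x (disjointed_le C j hx) y (disjointed_le C j hy)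

theorem measurableSet_accumulate {B : ℕ → Set X} (hB : ∀ i, MeasurableSet (B i)) (n : ℕ) :
    MeasurableSet (accumulate B n) :=
  .biUnion (to_countable _) fun i _ => hB i

theorem exists_measure_compl_accumulate_lt [IsFiniteMeasure μ] {B : ℕ → Set X}
    (hB : ∀ i, MeasurableSet (B i)) (hcover : μ (⋃ i, B i)ᶜ = 0) {δ : ℝ≥0∞} (hδ : 0 < δ) :
    ∃ n, μ (accumulate B n)ᶜ < δ := by
  have hlim : Tendsto (fun n => μ (accumulate B n)ᶜ) atTop (𝓝 0) := by
    have := tendsto_measure_iInter_atTop (μ := μ)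
      (fun n => (measurableSet_accumulate hB n).compl.nullMeasurableSet)
      (fun m n hmn => compl_subset_compl.2 (monotone_accumulate hmn)) ⟨0, measure_ne_top _ _⟩
    rwa [← compl_iUnion, iUnion_accumulate, hcover] at this
  exact (hlim.eventually (gt_mem_nhds hδ)).exists

theorem exists_isEntropyPartition_of_isAdmissible [IsFiniteMeasure μ] [NeZero μ]
    (hρ : IsSemimetric ρ) (hρmeas : Measurable fun p : X × X => ρ p.1 p.2)
    (h : IsAdmissible μ ρ) (hε : 0 < ε) : ∃ k, IsEntropyPartition μ ρ ε k := by
  obtain ⟨s, -, hs, D, hD, -, hdense⟩ := h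
  have := Measure.nonempty_of_neZero μ
  obtain ⟨f, hDf⟩ := countable_iff_exists_subset_range.1 hD
  set B : ℕ → Set X := fun i => {x | ρ x (f i) < ε / 2}
  have hB : ∀ i, MeasurableSet (B i) := fun i =>
    measurableSet_lt (hρmeas.comp (measurable_id.prodMk measurable_const)) measurable_const
  have hsB : s ⊆ ⋃ i, B i := fun x hx => by
    obtain ⟨y, hy, hxy⟩ := hdense x hx (ε / 2) (half_pos hε)
    obtain ⟨i, rfl⟩ := hDf hy
    exact mem_iUnion.2 ⟨i, hxy⟩
  have hdiamB : ∀ i, ∀ x ∈ B i, ∀ y ∈ B i, ρ x y < ε := fun i x hx y hy =>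
    calc ρ x y ≤ ρ x (f i) + ρ y (f i) := hρ.symm y (f i) ▸ hρ.triangle _ _ _
      _ < ε / 2 + ε / 2 := add_lt_add hx hy
      _ = ε := add_halves ε
  obtain ⟨n, hn⟩ := exists_measure_compl_accumulate_lt hB
    (measure_mono_null (compl_subset_compl.2 hsB) hs) (ENNReal.ofReal_pos.2 hε)
  refine ⟨n + 1, isEntropyPartition_of_cover (C := fun | 0 => (accumulate B n)ᶜ | i + 1 => B i)
    ?_ ?_ hn ?_⟩
  · rintro (_ | i)
    exacts [(measurableSet_accumulate hB n).compl, hB i]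
  · intro x
    by_cases hx : x ∈ accumulate B n
    · obtain ⟨i, hin, hxi⟩ := mem_accumulate.1 hx
      exact ⟨i + 1, by omega, hxi⟩
    · exact ⟨0, by omega, hx⟩
  · rintro (_ | i) hi
    exacts [absurd rfl hi, hdiamB i]

end EntropyPartition

section Admissible

theorem separableWRT_of_countable_fine_cover {Y ι : Type*} [Countable ι] {ρ : Y → Y → ℝ}
    {s : Set Y} (A : ι → Set Y)
    (h : ∀ x ∈ s, ∀ δ > 0, ∃ i, x ∈ A i ∧ ∀ y ∈ A i, ∀ z ∈ A i, ρ y z < δ) :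
    SeparableWRT ρ s := by
  refine ⟨range fun i : {i // (A i ∩ s).Nonempty} => i.2.some, countable_range _, ?_, ?_⟩
  · rintro _ ⟨i, rfl⟩
    exact i.2.some_mem.2
  · intro x hx δ hδ
    obtain ⟨i, hxi, hi⟩ := h x hx δ hδ
    have hne : (A i ∩ s).Nonempty := ⟨x, hxi, hx⟩
    exact ⟨hne.some, ⟨⟨i, hne⟩, rfl⟩, hi x hxi _ hne.some_mem.1⟩

variable {X : Type*} [MeasurableSpace X] {μ : Measure X} {ρ : X → X → ℝ}

theorem isAdmissible_of_ae_fine_cover {ι : Type*} [Countable ι] (A : ι → Set X)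
    (h : ∀ᵐ x ∂μ, ∀ δ > 0, ∃ i, x ∈ A i ∧ ∀ y ∈ A i, ∀ z ∈ A i, ρ y z < δ) :
    IsAdmissible μ ρ := by
  set N := {x | ¬∀ δ > 0, ∃ i, x ∈ A i ∧ ∀ y ∈ A i, ∀ z ∈ A i, ρ y z < δ}
  refine ⟨(toMeasurable μ N)ᶜ, (measurableSet_toMeasurable μ N).compl, ?_,
    separableWRT_of_countable_fine_cover A fun x hx => ?_⟩
  · rw [compl_compl, measure_toMeasurable]
    exact ae_iff.1 h
  · by_contra hx'
    exact hx (subset_toMeasurable μ N hx')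

theorem isAdmissible_of_forall_exists_isEntropyPartition
    (h : ∀ ε > 0, ∃ k, IsEntropyPartition μ ρ ε k) : IsAdmissible μ ρ := by
  choose k P _ _ hcover hP₀ hdiam using fun n : ℕ => h ((1 / 2) ^ n) (by positivity)
  have hsum : ∑' n, μ (P n 0) ≠ ⊤ := ne_top_of_le_ne_top ENNReal.ofReal_ne_top <|
    calc ∑' n, μ (P n 0) ≤ ∑' n, ENNReal.ofReal ((1 / 2) ^ n) :=
          ENNReal.tsum_le_tsum fun n => (hP₀ n).le
      _ = ENNReal.ofReal (∑' n : ℕ, (1 / 2 : ℝ) ^ n) :=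
          (ENNReal.ofReal_tsum_of_nonneg (fun n => by positivity) summable_geometric_two).symm
  refine isAdmissible_of_ae_fine_cover (fun i : Σ n, Fin (k n + 1) => P i.1 i.2) ?_
  filter_upwards [ae_eventually_notMem hsum] with x hx δ hδ
  have hsmall := (tendsto_pow_atTop_nhds_zero_of_lt_one (r := (1 / 2 : ℝ)) (by norm_num)
    (by norm_num)).eventually (gt_mem_nhds hδ)
  obtain ⟨n, hxn, hnδ⟩ := (hx.and hsmall).exists
  obtain ⟨j, hxj⟩ := mem_iUnion.1 (hcover n ▸ mem_univ x)
  have hj : j ≠ 0 := by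
    rintro rfl
    exact hxn hxj
  exact ⟨⟨n, j⟩, hxj, fun y hy z hz => (hdiam n j hj y hy z hz).trans hnδ⟩

end Admissible

theorem isAdmissible_iff_epsEntropy_lt_top_general
    {X : Type*} [MeasurableSpace X]
    (μ : Measure X) [IsProbabilityMeasure μ]
    (ρ : X → X → ℝ) (hρ : IsSemimetric ρ)
    (hρmeas : Measurable fun p : X × X => ρ p.1 p.2) :
    IsAdmissible μ ρ ↔ ∀ ε : ℝ, 0 < ε → epsEntropy μ ρ ε < ⊤ := by
  simp only [epsEntropy_lt_top_iff]
  exact ⟨fun h _ hε => exists_isEntropyPartition_of_isAdmissible hρ hρmeas h hε,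
    isAdmissible_of_forall_exists_isEntropyPartition⟩

/-- A measurable semimetric `ρ` on a standard probability space `(X, μ)` is
admissible if and only if `ℍ_ε(X, μ, ρ) < ∞` for every `ε > 0`. -/
theorem isAdmissible_iff_epsEntropy_lt_top
    {X : Type*} [MeasurableSpace X] [StandardBorelSpace X]
    (μ : Measure X) [IsProbabilityMeasure μ]
    (ρ : X → X → ℝ) (hρ : IsSemimetric ρ)
    (hρmeas : Measurable fun p : X × X => ρ p.1 p.2) :
    IsAdmissible μ ρ ↔ ∀ ε : ℝ, 0 < ε → epsEntropy μ ρ ε < ⊤ :=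
  isAdmissible_iff_epsEntropy_lt_top_general μ ρ hρ hρmeas
end

section
/- The class of scaling entropy sequences is a metric invariant of ergodic dynamical systems: if (X₁,μ₁,T₁) and (X₂,μ₂,T₂) are ergodic metric dynamical systems that are measure-theoretically isomorphic (i.e., there is a measure-preserving bijection mod zero φ: X₁ → X₂ with φ∘T₁ = T₂∘φ almost everywhere), then ℋ(X₁,μ₁,T₁) = ℋ(X₂,μ₂,T₂). -/
open MeasureTheory Filter Set
open scoped ENNReal

variable {X : Type*} [MeasurableSpace X]

/-! Pulling the semimetric `ρ` back along the inverse isomorphism `ψ` gives `ρ ∘ (ψ × ψ)`, whose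
averages `T₂ⁿ_av` agree with `(T₁ⁿ_av ρ) ∘ (ψ × ψ)` off a null set, because `ψ` conjugates every
power of `T₂` to the same power of `T₁` almost everywhere. Entropy partitions pull back along
measure-preserving maps once the exceptional null set is thrown into the junk piece `X₀`, so
`ψ` and `φ` carry entropy partitions back and forth and the ε-entropies coincide for all `n`
and `ε`. Summability, admissibility and the generating property survive the pullback because
`ψ` is measure preserving and injective off a null set. -/

section Conjugacy

variable {α β : Type*} [MeasurableSpace α] {μ : Measure α}

theorem ae_semiconj_iterate {f : α → α} {g : β → β} {ψ : α → β}
    (hf : Measure.QuasiMeasurePreserving f μ μ) (h : ∀ᵐ x ∂μ, ψ (f x) = g (ψ x)) (n : ℕ) :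
    ∀ᵐ x ∂μ, ψ (f^[n] x) = g^[n] (ψ x) := by
  induction n with
  | zero => simp
  | succ n ih =>
    filter_upwards [hf.ae ih, h] with x hn h1
    rw [Function.iterate_succ_apply, Function.iterate_succ_apply, hn, h1]

theorem ae_semiconj_zpow {T : Equiv.Perm α} {S : Equiv.Perm β} {ψ : α → β}
    (hT : MeasurePreserving T μ μ) (hTsymm : Measurable T.symm)
    (h : ∀ᵐ x ∂μ, ψ (T x) = S (ψ x)) :
    ∀ᵐ x ∂μ, ∀ k : ℤ, ψ ((T ^ k) x) = (S ^ k) (ψ x) := by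
  have hTinv : MeasurePreserving T.symm μ μ :=
    MeasurePreserving.symm (⟨T, hT.measurable, hTsymm⟩ : α ≃ᵐ α) hT
  have h_inv : ∀ᵐ x ∂μ, ψ (T.symm x) = S.symm (ψ x) := by
    filter_upwards [hTinv.quasiMeasurePreserving.ae h] with x hx
    rw [Equiv.apply_symm_apply] at hx
    rw [hx, Equiv.symm_apply_apply]
  refine ae_all_iff.2 fun k => ?_
  obtain ⟨n, rfl | rfl⟩ := Int.eq_nat_or_neg k
  · simpa only [zpow_natCast, Equiv.Perm.coe_pow] using
      ae_semiconj_iterate hT.quasiMeasurePreserving h n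
  · simpa only [zpow_neg, zpow_natCast, ← inv_pow, Equiv.Perm.coe_pow, Equiv.Perm.coe_inv] using
      ae_semiconj_iterate hTinv.quasiMeasurePreserving h_inv n

theorem ae_semiconj_of_ae_inverse [MeasurableSpace β] {ν : Measure β}
    {f : α → α} {g : β → β} {φ : α → β} {ψ : β → α}
    (hf : Measure.QuasiMeasurePreserving f μ μ) (hψ : Measure.QuasiMeasurePreserving ψ ν μ)
    (hψφ : ∀ᵐ x ∂μ, ψ (φ x) = x) (hφψ : ∀ᵐ y ∂ν, φ (ψ y) = y)
    (hconj : ∀ᵐ x ∂μ, φ (f x) = g (φ x)) :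
    ∀ᵐ y ∂ν, ψ (g y) = f (ψ y) := by
  filter_upwards [hψ.ae hconj, hφψ, hψ.ae (hf.ae hψφ)] with y h_conj h_right h_left
  rw [← h_left, h_conj, h_right]

end Conjugacy

section EntropyPartition

variable {α β : Type*} [MeasurableSpace α] [MeasurableSpace β]

theorem isEntropyPartition_iff_exists_coloring {μ : Measure α} {σ : α → α → ℝ} {ε : ℝ} {k : ℕ} :
    IsEntropyPartition μ σ ε k ↔ ∃ c : α → Fin (k + 1), Measurable c ∧
      μ (c ⁻¹' {0}) < ENNReal.ofReal ε ∧ ∀ x y, c x = c y → c x ≠ 0 → σ x y < ε := by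
  constructor
  · rintro ⟨P, hPm, hPd, hPu, hP0, hPdiam⟩
    have hcover : ∀ x, ∃ j, x ∈ P j := fun x => Set.mem_iUnion.1 (hPu ▸ Set.mem_univ x)
    choose c hc using hcover
    have hfiber : ∀ j, c ⁻¹' {j} = P j := fun j => Set.ext fun x =>
      ⟨fun hx => hx ▸ hc x,
        fun hx => by_contra fun hne => Set.disjoint_left.1 (hPd hne) (hc x) hx⟩
    refine ⟨c, measurable_to_countable' fun j => hfiber j ▸ hPm j, hfiber 0 ▸ hP0,
      fun x y hxy hx0 => hPdiam (c x) hx0 x (hc x) y (hxy ▸ hc y)⟩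
  · rintro ⟨c, hcm, hc0, hcdiam⟩
    refine ⟨fun j => c ⁻¹' {j}, fun j => hcm (measurableSet_singleton j),
      pairwise_disjoint_fiber c, Set.eq_univ_of_forall fun x => Set.mem_iUnion.2 ⟨c x, rfl⟩,
      hc0, ?_⟩
    rintro j hj x rfl y hy
    exact hcdiam x y hy.symm hj

theorem IsEntropyPartition.comap_of_ae {μ : Measure α} {ν : Measure β} {f : α → β}
    (hf : MeasurePreserving f μ ν) {σ : α → α → ℝ} {τ : β → β → ℝ} {p : α → Prop}
    (hp : ∀ᵐ x ∂μ, p x) (hστ : ∀ x y, p x → p y → σ x y = τ (f x) (f y)) {ε : ℝ} {k : ℕ}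
    (h : IsEntropyPartition ν τ ε k) : IsEntropyPartition μ σ ε k := by
  classical
  obtain ⟨G, hGae, hGm, hGp⟩ := hp.exists_measurable_mem
  obtain ⟨c, hcm, hc0, hcdiam⟩ := isEntropyPartition_iff_exists_coloring.1 h
  refine isEntropyPartition_iff_exists_coloring.2
    ⟨fun x => if x ∈ G then c (f x) else 0, Measurable.ite hGm (hcm.comp hf.measurable)
      measurable_const, ?_, ?_⟩
  · have hsub : (fun x => if x ∈ G then c (f x) else 0) ⁻¹' {0} ⊆ f ⁻¹' (c ⁻¹' {0}) ∪ Gᶜ := by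
      intro x hx
      by_cases hxG : x ∈ G
      · exact Or.inl (by simpa [hxG] using hx)
      · exact Or.inr hxG
    calc _ ≤ μ (f ⁻¹' (c ⁻¹' {0}) ∪ Gᶜ) := measure_mono hsub
      _ ≤ μ (f ⁻¹' (c ⁻¹' {0})) + μ Gᶜ := measure_union_le _ _
      _ = ν (c ⁻¹' {0}) := by
        rw [mem_ae_iff.1 hGae, add_zero,
          hf.measure_preimage (hcm (measurableSet_singleton 0)).nullMeasurableSet]
      _ < ENNReal.ofReal ε := hc0
  · intro x y hxy hx0
    have hxG : x ∈ G := by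
      by_contra hx
      simp [hx] at hx0
    have hyG : y ∈ G := by
      by_contra hy
      simp [hy, hxy] at hx0
    simp only [hxG, hyG, if_true] at hxy hx0
    rw [hστ x y (hGp x hxG) (hGp y hyG)]
    exact hcdiam _ _ hxy hx0

theorem epsEntropy_congr {μ : Measure α} {ν : Measure β} {σ : α → α → ℝ} {τ : β → β → ℝ}
    {ε : ℝ} (h : ∀ k, IsEntropyPartition μ σ ε k ↔ IsEntropyPartition ν τ ε k) :
    epsEntropy μ σ ε = epsEntropy ν τ ε := by
  have heq : IsEntropyPartition μ σ ε = IsEntropyPartition ν τ ε := funext fun k => propext (h k)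
  unfold epsEntropy
  rw [heq]

end EntropyPartition

section Pullback

variable {α β : Type*}

theorem IsSemimetric.comap {ρ : α → α → ℝ} (hρ : IsSemimetric ρ) (ψ : β → α) :
    IsSemimetric fun a b => ρ (ψ a) (ψ b) :=
  ⟨fun _ => hρ.refl _, fun _ _ => hρ.symm _ _, fun _ _ => hρ.nonneg _ _,
    fun _ _ _ => hρ.triangle _ _ _⟩

/-- The new dense set picks, for each `d ∈ D` and `n`, a point of `t` that is `1/(n+1)`-close
to `d` if there is one. -/
theorem SeparableWRT.comap {ρ : α → α → ℝ} (hρ : IsSemimetric ρ) {s : Set α}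
    (hs : SeparableWRT ρ s) {ψ : β → α} {t : Set β} (ht : t ⊆ ψ ⁻¹' s) :
    SeparableWRT (fun a b => ρ (ψ a) (ψ b)) t := by
  obtain ⟨D, hDc, -, hDdense⟩ := hs
  have : Countable D := hDc.to_subtype
  let near : D × ℕ → Set β := fun p => {y ∈ t | ρ (ψ y) p.1 < 1 / (p.2 + 1)}
  let pick : {p : D × ℕ // (near p).Nonempty} → β := fun p => p.2.some
  refine ⟨Set.range pick, Set.countable_range pick, ?_, ?_⟩
  · rintro _ ⟨p, rfl⟩
    exact p.2.some_mem.1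
  · intro x hx ε hε
    obtain ⟨n, hn⟩ := exists_nat_one_div_lt (half_pos hε)
    obtain ⟨d, hd, hxd⟩ := hDdense (ψ x) (ht hx) (1 / (n + 1)) (by positivity)
    let p : {p : D × ℕ // (near p).Nonempty} := ⟨(⟨d, hd⟩, n), x, hx, hxd⟩
    refine ⟨pick p, Set.mem_range_self p, ?_⟩
    calc ρ (ψ x) (ψ (pick p)) ≤ ρ (ψ x) d + ρ (ψ (pick p)) d :=
          (hρ.triangle _ d _).trans_eq (by rw [hρ.symm d])
      _ < ε / 2 + ε / 2 := add_lt_add (hxd.trans hn) (p.2.some_mem.2.trans hn)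
      _ = ε := add_halves ε

theorem avgSemimetric_comap_apply {T : Equiv.Perm α} {S : Equiv.Perm β} {ρ : α → α → ℝ}
    {ψ : β → α} {x y : β} (hx : ∀ k : ℤ, ψ ((S ^ k) x) = (T ^ k) (ψ x))
    (hy : ∀ k : ℤ, ψ ((S ^ k) y) = (T ^ k) (ψ y)) (n : ℕ) :
    avgSemimetric S (fun a b => ρ (ψ a) (ψ b)) n x y = avgSemimetric T ρ n (ψ x) (ψ y) := by
  simp only [avgSemimetric, ← zpow_natCast, hx, hy]

variable [MeasurableSpace α] [MeasurableSpace β] {μ : Measure α} {ν : Measure β}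

theorem IsAdmissible.comap {ρ : α → α → ℝ} (hρ : IsSemimetric ρ) {ψ : β → α}
    (hψ : MeasurePreserving ψ ν μ) (h : IsAdmissible μ ρ) :
    IsAdmissible ν fun a b => ρ (ψ a) (ψ b) := by
  obtain ⟨s, hsm, hs0, hsep⟩ := h
  refine ⟨ψ ⁻¹' s, hψ.measurable hsm, ?_, hsep.comap hρ subset_rfl⟩
  rwa [← Set.preimage_compl, hψ.measure_preimage hsm.compl.nullMeasurableSet]

theorem IsGenerating.comap {T : Equiv.Perm α} {S : Equiv.Perm β} {ρ : α → α → ℝ}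
    {φ : α → β} {ψ : β → α} (hψ : MeasurePreserving ψ ν μ) (hφψ : ∀ᵐ y ∂ν, φ (ψ y) = y)
    (hconj : ∀ᵐ y ∂ν, ∀ k : ℤ, ψ ((S ^ k) y) = (T ^ k) (ψ y)) (h : IsGenerating μ T ρ) :
    IsGenerating ν S fun a b => ρ (ψ a) (ψ b) := by
  obtain ⟨s, hsm, hs0, hsep⟩ := h
  have hs : ∀ᵐ y ∂ν, ψ y ∈ s := hψ.quasiMeasurePreserving.ae (mem_ae_iff.2 hs0)
  obtain ⟨G, hGae, hGm, hG⟩ := (hs.and (hφψ.and hconj)).exists_measurable_mem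
  refine ⟨G, hGm, mem_ae_iff.1 hGae, fun x hx y hy hxy => ?_⟩
  obtain ⟨hxs, hφψx, hconjx⟩ := hG x hx
  obtain ⟨hys, hφψy, hconjy⟩ := hG y hy
  have hψxy : ψ x ≠ ψ y := fun e => hxy (by rw [← hφψx, ← hφψy, e])
  obtain ⟨k, hk⟩ := hsep (ψ x) hxs (ψ y) hys hψxy
  exact ⟨k, by simpa only [hconjx k, hconjy k] using hk⟩

theorem epsEntropy_avgSemimetric_comap {T : Equiv.Perm α} {S : Equiv.Perm β}
    {ρ : α → α → ℝ} {φ : α → β} {ψ : β → α} (hφ : MeasurePreserving φ μ ν)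
    (hψ : MeasurePreserving ψ ν μ) (hψφ : ∀ᵐ x ∂μ, ψ (φ x) = x)
    (hconj : ∀ᵐ y ∂ν, ∀ k : ℤ, ψ ((S ^ k) y) = (T ^ k) (ψ y)) (n : ℕ) (ε : ℝ) :
    epsEntropy ν (avgSemimetric S (fun a b => ρ (ψ a) (ψ b)) n) ε
      = epsEntropy μ (avgSemimetric T ρ n) ε := by
  refine epsEntropy_congr fun k => ⟨fun h => ?_, fun h => ?_⟩
  · refine h.comap_of_ae hφ (hψφ.and (hφ.quasiMeasurePreserving.ae hconj)) ?_
    rintro x y ⟨hψφx, hconjx⟩ ⟨hψφy, hconjy⟩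
    rw [avgSemimetric_comap_apply hconjx hconjy, hψφx, hψφy]
  · exact h.comap_of_ae hψ hconj fun x y hx hy => avgSemimetric_comap_apply hx hy n

theorem isScalingSeq_congr {T : Equiv.Perm α} {S : Equiv.Perm β} {ρ : α → α → ℝ}
    {σ : β → β → ℝ} {h : ℕ → ℝ}
    (hent : ∀ n ε, epsEntropy ν (avgSemimetric S σ n) ε = epsEntropy μ (avgSemimetric T ρ n) ε) :
    IsScalingSeq ν S σ h ↔ IsScalingSeq μ T ρ h := by
  simp only [IsScalingSeq, hent]

theorem IsScalingEntropySeq.comap [SFinite μ] [SFinite ν]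
    {T : Equiv.Perm α} {S : Equiv.Perm β} {φ : α → β} {ψ : β → α} {h : ℕ → ℝ}
    (hφ : MeasurePreserving φ μ ν) (hψ : MeasurePreserving ψ ν μ)
    (hψφ : ∀ᵐ x ∂μ, ψ (φ x) = x) (hφψ : ∀ᵐ y ∂ν, φ (ψ y) = y)
    (hconj : ∀ᵐ y ∂ν, ∀ k : ℤ, ψ ((S ^ k) y) = (T ^ k) (ψ y))
    (hseq : IsScalingEntropySeq μ T h) : IsScalingEntropySeq ν S h := by
  obtain ⟨ρ, hρ, hmeas, hint, hadm, hgen, hscal⟩ := hseq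
  exact ⟨_, hρ.comap ψ, hmeas.comp (hψ.measurable.prodMap hψ.measurable),
    ((hψ.prod hψ).integrable_comp hint.aestronglyMeasurable).2 hint, hadm.comap hρ hψ,
    hgen.comap hψ hφψ hconj,
    (isScalingSeq_congr (epsEntropy_avgSemimetric_comap hφ hψ hψφ hconj)).2 hscal⟩

end Pullback

theorem scalingEntropySeq_class_eq_of_iso_general
    {X₁ : Type*} [MeasurableSpace X₁]
    {X₂ : Type*} [MeasurableSpace X₂]
    (μ₁ : Measure X₁) [IsProbabilityMeasure μ₁]
    (μ₂ : Measure X₂) [IsProbabilityMeasure μ₂]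
    (T₁ : Equiv.Perm X₁) (hT₁symm : Measurable (⇑T₁.symm))
    (hT₁erg : Ergodic (⇑T₁) μ₁)
    (T₂ : Equiv.Perm X₂) (hT₂symm : Measurable (⇑T₂.symm))
    (hT₂erg : Ergodic (⇑T₂) μ₂)
    (φ : X₁ → X₂) (hφ : MeasurePreserving φ μ₁ μ₂)
    (ψ : X₂ → X₁) (hψ : MeasurePreserving ψ μ₂ μ₁)
    (hψφ : ∀ᵐ x ∂μ₁, ψ (φ x) = x) (hφψ : ∀ᵐ y ∂μ₂, φ (ψ y) = y)
    (hconj : ∀ᵐ x ∂μ₁, φ (T₁ x) = T₂ (φ x)) :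
    {h : ℕ → ℝ | IsScalingEntropySeq μ₁ T₁ h} = {h : ℕ → ℝ | IsScalingEntropySeq μ₂ T₂ h} := by
  have hT₁ : MeasurePreserving T₁ μ₁ μ₁ := hT₁erg.toMeasurePreserving
  have hT₂ : MeasurePreserving T₂ μ₂ μ₂ := hT₂erg.toMeasurePreserving
  have hconj' : ∀ᵐ y ∂μ₂, ψ (T₂ y) = T₁ (ψ y) :=
    ae_semiconj_of_ae_inverse hT₁.quasiMeasurePreserving hψ.quasiMeasurePreserving hψφ hφψ hconj
  ext h
  exact ⟨IsScalingEntropySeq.comap hφ hψ hψφ hφψ (ae_semiconj_zpow hT₂ hT₂symm hconj'),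
    IsScalingEntropySeq.comap hψ hφ hφψ hψφ (ae_semiconj_zpow hT₁ hT₁symm hconj)⟩

/-- The class of scaling entropy sequences is a metric invariant: isomorphic
ergodic systems have equal classes `ℋ(X₁,μ₁,T₁) = ℋ(X₂,μ₂,T₂)`. -/
theorem scalingEntropySeq_class_eq_of_iso
    {X₁ : Type*} [MeasurableSpace X₁] [StandardBorelSpace X₁]
    {X₂ : Type*} [MeasurableSpace X₂] [StandardBorelSpace X₂]
    (μ₁ : Measure X₁) [IsProbabilityMeasure μ₁]
    (μ₂ : Measure X₂) [IsProbabilityMeasure μ₂]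
    (T₁ : Equiv.Perm X₁) (hT₁ : Measurable (⇑T₁)) (hT₁symm : Measurable (⇑T₁.symm))
    (hT₁erg : Ergodic (⇑T₁) μ₁)
    (T₂ : Equiv.Perm X₂) (hT₂ : Measurable (⇑T₂)) (hT₂symm : Measurable (⇑T₂.symm))
    (hT₂erg : Ergodic (⇑T₂) μ₂)
    (φ : X₁ → X₂) (hφ : MeasurePreserving φ μ₁ μ₂)
    (ψ : X₂ → X₁) (hψ : MeasurePreserving ψ μ₂ μ₁)
    (hψφ : ∀ᵐ x ∂μ₁, ψ (φ x) = x) (hφψ : ∀ᵐ y ∂μ₂, φ (ψ y) = y)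
    (hconj : ∀ᵐ x ∂μ₁, φ (T₁ x) = T₂ (φ x)) :
    {h : ℕ → ℝ | IsScalingEntropySeq μ₁ T₁ h} = {h : ℕ → ℝ | IsScalingEntropySeq μ₂ T₂ h} :=
  scalingEntropySeq_class_eq_of_iso_general μ₁ μ₂ T₁ hT₁symm hT₁erg T₂ hT₂symm hT₂erg φ hφ ψ hψ hψφ
    hφψ hconj
end

section
/- Let (A,ν) be a standard probability space whose measure ν has no atoms, let X = A^ℤ with the product measure μ = ν^ℤ, and let T: X → X be the left shift. Then the sequence h_n = n is a scaling entropy sequence of the Bernoulli shift (X,μ,T). -/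
open MeasureTheory Filter Set
open scoped ENNReal

variable {X : Type*} [MeasurableSpace X]

/-- The two-sided Bernoulli shift on `A^ℤ` as a permutation: `(T x) n = x (n + 1)`. -/
def bernoulliShift (A : Type*) : Equiv.Perm (ℤ → A) where
  toFun x := fun n => x (n + 1)
  invFun x := fun n => x (n - 1)
  left_inv x := funext fun n => by simp
  right_inv x := funext fun n => by simp

open scoped Topology

lemma shift_npow_apply {A : Type*} (m : ℕ) (x : ℤ → A) (n : ℤ) :
    ((bernoulliShift A ^ m) x) n = x (n + m) := by
  induction m generalizing x n with
  | zero => simp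
  | succ m ih =>
    rw [pow_succ]
    show ((bernoulliShift A ^ m) (bernoulliShift A x)) n = _
    rw [ih]
    show x (n + m + 1) = x (n + (m + 1))
    congr 1
    push_cast
    ring

lemma shift_zpow_apply {A : Type*} (k : ℤ) (x : ℤ → A) (n : ℤ) :
    ((bernoulliShift A ^ k) x) n = x (n + k) := by
  cases k with
  | ofNat m => rw [Int.ofNat_eq_coe, zpow_natCast]; exact shift_npow_apply m x n
  | negSucc m =>
    rw [zpow_negSucc]
    set S := bernoulliShift A ^ (m + 1) with hS
    set y := (S⁻¹ : Equiv.Perm (ℤ → A)) x with hy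
    have hx : S y = x := by rw [hy]; simp
    have h2 := shift_npow_apply (A := A) (m + 1) y (n + Int.negSucc m)
    rw [← hS, hx] at h2
    show y n = x (n + Int.negSucc m)
    rw [h2]
    congr 1
    rw [Int.negSucc_eq]
    push_cast
    ring

lemma small_balls (ν' : Measure ℝ) [IsProbabilityMeasure ν'] [NullSingletonClass ν'] :
    ∃ δ : ℝ, 0 < δ ∧ ∀ t ∈ Icc (0:ℝ) 1, ν' (Icc (t - δ) (t + δ)) ≤ 1/16 := by
  -- for each t, find r > 0 with ν' (Icc (t - 2r) (t + 2r)) ≤ 1/16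
  have key : ∀ t : ℝ, ∃ r : ℝ, 0 < r ∧ ν' (Icc (t - 2*r) (t + 2*r)) ≤ 1/16 := by
    intro t
    have h1 : Tendsto (fun m : ℕ => ν' (Icc (t - 1/(m+1)) (t + 1/(m+1)))) atTop
        (𝓝 (ν' (⋂ m : ℕ, Icc (t - 1/(m+1)) (t + 1/(m+1))))) := by
      apply tendsto_measure_iInter_atTop
      · exact fun m => (measurableSet_Icc).nullMeasurableSet
      · intro a b hab
        apply Icc_subset_Icc <;>
        · have : 1/((b:ℝ)+1) ≤ 1/((a:ℝ)+1) := by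
            apply one_div_le_one_div_of_le <;> [positivity; exact_mod_cast by omega]
          linarith
      · exact ⟨0, measure_ne_top _ _⟩
    have h2 : (⋂ m : ℕ, Icc (t - 1/(m+1)) (t + 1/(m+1))) = {t} := by
      ext s
      simp only [mem_iInter, mem_Icc, mem_singleton_iff]
      constructor
      · intro h
        have : ∀ m : ℕ, |s - t| ≤ 1/(m+1) := by
          intro m; rw [abs_sub_le_iff]; constructor <;> [linarith [(h m).2]; linarith [(h m).1]]
        have h0 : |s - t| ≤ 0 := by
          by_contra hc
          push_neg at hc
          obtain ⟨m, hm⟩ := exists_nat_one_div_lt hc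
          exact absurd (this m) (by push_cast; push_cast at hm; linarith)
        have := abs_nonneg (s - t)
        have : |s - t| = 0 := le_antisymm h0 this
        have := abs_eq_zero.mp this
        linarith [sub_eq_zero.mp this]
      · rintro rfl
        intro m
        constructor <;> [linarith [one_div_pos.mpr (by positivity : (0:ℝ) < (m:ℝ)+1)];
          linarith [one_div_pos.mpr (by positivity : (0:ℝ) < (m:ℝ)+1)]]
    rw [h2, measure_singleton] at h1
    have h3 : ∀ᶠ m : ℕ in atTop, ν' (Icc (t - 1/(m+1)) (t + 1/(m+1))) < 1/16 := by
      apply h1.eventually_lt_const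
      norm_num
    obtain ⟨m, hm⟩ := h3.exists
    exact ⟨1/(2*(m+1)), by positivity, by
      have e1 : t - 2*(1/(2*((m:ℝ)+1))) = t - 1/(m+1) := by field_simp
      have e2 : t + 2*(1/(2*((m:ℝ)+1))) = t + 1/(m+1) := by field_simp
      rw [e1, e2]
      exact hm.le⟩
  choose r hr hr16 using key
  -- compact cover
  have hcover : Icc (0:ℝ) 1 ⊆ ⋃ t : ↥(Icc (0:ℝ) 1), Ioo ((t:ℝ) - r t) ((t:ℝ) + r t) := by
    intro t ht
    exact mem_iUnion.mpr ⟨⟨t, ht⟩, mem_Ioo.mpr ⟨by linarith [hr t], by linarith [hr t]⟩⟩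
  obtain ⟨F, hF⟩ := isCompact_Icc.elim_finite_subcover
    (fun t : ↥(Icc (0:ℝ) 1) => Ioo ((t:ℝ) - r t) ((t:ℝ) + r t)) (fun t => isOpen_Ioo) hcover
  have hFne : F.Nonempty := by
    by_contra hc
    rw [Finset.not_nonempty_iff_eq_empty] at hc
    have := hF (by norm_num : (0:ℝ) ∈ Icc (0:ℝ) 1)
    simp [hc] at this
  set δ := F.inf' hFne (fun t => r t) with hδ
  have hδpos : 0 < δ := by
    rw [hδ, Finset.lt_inf'_iff]
    exact fun t _ => hr t
  refine ⟨δ, hδpos, fun t ht => ?_⟩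
  obtain ⟨i, hiF, hi⟩ := by
    have := hF ht
    simpa only [mem_iUnion, exists_prop] using this
  have hδi : δ ≤ r i := Finset.inf'_le _ hiF
  have hsub : Icc (t - δ) (t + δ) ⊆ Icc ((i:ℝ) - 2*(r i)) ((i:ℝ) + 2*(r i)) := by
    apply Icc_subset_Icc
    · simp only [mem_Ioo] at hi; linarith
    · simp only [mem_Ioo] at hi; linarith
  exact le_trans (measure_mono hsub) (hr16 i)

lemma idx_mem (m : ℕ) (hm : 1 ≤ m) {t : ℝ} (ht : t ∈ Icc (0:ℝ) 1) :
    ((min (m-1) ⌊(m:ℝ)*t⌋₊ : ℕ) : ℝ)/m ≤ t ∧ t ≤ ((min (m-1) ⌊(m:ℝ)*t⌋₊ : ℕ) + 1 : ℝ)/m := by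
  obtain ⟨ht0, ht1⟩ := ht
  have hm0 : (0:ℝ) < m := by exact_mod_cast hm
  rcases le_or_gt (⌊(m:ℝ)*t⌋₊) (m-1) with h | h
  · rw [min_eq_right h]
    have h1 : ((⌊(m:ℝ)*t⌋₊ : ℝ)) ≤ (m:ℝ)*t := Nat.floor_le (by positivity)
    have h2 : (m:ℝ)*t < ⌊(m:ℝ)*t⌋₊ + 1 := Nat.lt_floor_add_one _
    constructor
    · rw [div_le_iff₀ hm0]; linarith
    · rw [le_div_iff₀ hm0]; linarith
  · have hge : (m:ℝ) ≤ (m:ℝ)*t := by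
      have : m ≤ ⌊(m:ℝ)*t⌋₊ := by omega
      calc (m:ℝ) ≤ (⌊(m:ℝ)*t⌋₊ : ℝ) := by exact_mod_cast this
        _ ≤ (m:ℝ)*t := Nat.floor_le (by positivity)
    have ht1' : t = 1 := le_antisymm ht1 (by nlinarith)
    rw [min_eq_left h.le, ht1']
    have hcast : ((m-1 : ℕ) : ℝ) = (m:ℝ) - 1 := by
      rw [Nat.cast_sub hm]; norm_num
    rw [hcast]
    constructor
    · rw [div_le_iff₀ hm0]; linarith
    · rw [le_div_iff₀ hm0]; linarith

lemma idx_close (m : ℕ) (hm : 1 ≤ m) {t t' : ℝ} (ht : t ∈ Icc (0:ℝ) 1) (ht' : t' ∈ Icc (0:ℝ) 1)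
    (h : min (m-1) ⌊(m:ℝ)*t⌋₊ = min (m-1) ⌊(m:ℝ)*t'⌋₊) : |t - t'| ≤ 1/m := by
  obtain ⟨h1, h2⟩ := idx_mem m hm ht
  obtain ⟨h1', h2'⟩ := idx_mem m hm ht'
  rw [h] at h1 h2
  have hm0 : (0:ℝ) < m := by exact_mod_cast hm
  rw [abs_sub_le_iff]
  have key : ((min (m-1) ⌊(m:ℝ)*t'⌋₊ : ℕ) + 1 : ℝ)/m - ((min (m-1) ⌊(m:ℝ)*t'⌋₊ : ℕ) : ℝ)/m
      = 1/m := by field_simp; ring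
  constructor <;> linarith

lemma cylinder_measure {A : Type*} [MeasurableSpace A] (ν : Measure A) [SigmaFinite ν]
    (μ : Measure (ℤ → A))
    (hμ : ∀ s : Finset ℤ, Measure.map (fun x (i : s) => x i) μ = Measure.pi fun _ : s => ν)
    (s : Finset ℤ) (B : ℤ → Set A) (hB : ∀ i, MeasurableSet (B i)) :
    μ {x | ∀ i ∈ s, x i ∈ B i} = ∏ i ∈ s, ν (B i) := by
  have hproj : Measurable (fun (x : ℤ → A) (i : s) => x (i:ℤ)) :=
    measurable_pi_lambda _ (fun i => measurable_pi_apply (i:ℤ))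
  have hset : {x : ℤ → A | ∀ i ∈ s, x i ∈ B i}
      = (fun x (i : s) => x (i:ℤ)) ⁻¹' (univ.pi fun i : s => B i) := by
    ext x
    simp [Set.mem_pi, Subtype.forall]
  rw [hset, ← Measure.map_apply hproj (MeasurableSet.univ_pi fun i => hB i), hμ s,
    Measure.pi_pi]
  exact Finset.prod_coe_sort s (fun i => ν (B i))

lemma upper_partition {A : Type*} [MeasurableSpace A] (μ : Measure (ℤ → A))
    (g : A → ℝ) (hg : Measurable g) (hg01 : ∀ a, g a ∈ Icc (0:ℝ) 1)
    (ε : ℝ) (hε : 0 < ε) (n : ℕ) (hn : 1 ≤ n) :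
    IsEntropyPartition μ
      (avgSemimetric (bernoulliShift A) (fun x y => |g (x 0) - g (y 0)|) n) ε
      ((max 1 ⌈2/ε⌉₊) ^ n) := by
  classical
  set m := max 1 ⌈2/ε⌉₊ with hmdef
  have hm1 : 1 ≤ m := le_max_left _ _
  have hm0 : (0:ℝ) < m := by exact_mod_cast hm1
  have hmε : 1/(m:ℝ) ≤ ε/2 := by
    have h1 : 2/ε ≤ (m:ℝ) := le_trans (Nat.le_ceil _) (by exact_mod_cast le_max_right 1 ⌈2/ε⌉₊)
    rw [div_le_div_iff₀ hm0 (by norm_num : (0:ℝ) < 2)]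
    rw [div_le_iff₀ hε] at h1
    linarith
  set idxn : ℝ → ℕ := fun t => min (m-1) ⌊(m:ℝ)*t⌋₊ with hidxn
  have hidxn_lt : ∀ t, idxn t < m := fun t => by
    have : m - 1 < m := by omega
    exact lt_of_le_of_lt (min_le_left _ _) this
  set idx : ℝ → Fin m := fun t => ⟨idxn t, hidxn_lt t⟩ with hidx
  have hidxn_meas : Measurable idxn := by
    have h1 : Measurable (fun t : ℝ => ⌊(m:ℝ)*t⌋₊) :=
      Nat.measurable_floor.comp (measurable_id.const_mul _)
    exact (measurable_from_top (f := fun k : ℕ => min (m-1) k)).comp h1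
  have hidx_meas : Measurable idx :=
    (measurable_from_top (f := fun k : ℕ => (⟨min (m-1) k, by
      have : m - 1 < m := by omega
      exact lt_of_le_of_lt (min_le_left _ _) this⟩ : Fin m))).comp
      (Nat.measurable_floor.comp (measurable_id.const_mul _))
  set c : (ℤ → A) → (Fin n → Fin m) := fun x k => idx (g (x ((k:ℕ):ℤ))) with hcdef
  set enc : (Fin n → Fin m) ≃ Fin (m ^ n) := finFunctionFinEquiv with henc
  set Q : Fin (m^n) → Set (ℤ → A) := fun v => {x | c x = enc.symm v} with hQ
  have hQmeas : ∀ v, MeasurableSet (Q v) := by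
    intro v
    have : Q v = ⋂ k : Fin n, (fun x : ℤ → A => idx (g (x ((k:ℕ):ℤ)))) ⁻¹' {enc.symm v k} := by
      ext x
      simp only [hQ, mem_setOf_eq, mem_iInter, mem_preimage, mem_singleton_iff, funext_iff]; exact Iff.rfl
    rw [this]
    exact MeasurableSet.iInter fun k =>
      (hidx_meas.comp (hg.comp (measurable_pi_apply _))) (measurableSet_singleton _)
  refine ⟨Fin.cases ∅ Q, ?_, ?_, ?_, ?_, ?_⟩
  · -- measurability
    intro j
    induction j using Fin.cases with
    | zero => simp
    | succ i => simpa using hQmeas i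
  · -- pairwise disjoint
    intro i j hij
    rcases Fin.eq_zero_or_eq_succ i with rfl | ⟨a, rfl⟩
    · simp
    rcases Fin.eq_zero_or_eq_succ j with rfl | ⟨b, rfl⟩
    · simp
    have hab : a ≠ b := fun h => hij (by rw [h])
    simp only [Fin.cases_succ]
    rw [Set.disjoint_left]
    intro x hxa hxb
    rw [hQ] at hxa hxb
    apply hab
    apply enc.symm.injective
    rw [← hxa, ← hxb]
  · -- union
    apply eq_univ_of_forall
    intro x
    apply mem_iUnion.mpr
    refine ⟨Fin.succ (enc (c x)), ?_⟩
    simp only [Fin.cases_succ, hQ, mem_setOf_eq, Equiv.symm_apply_apply]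
  · -- small part
    simp only [Fin.cases_zero]
    rw [measure_empty]
    exact ENNReal.ofReal_pos.mpr hε
  · -- diameters
    intro j hj x hx y hy
    rcases Fin.eq_zero_or_eq_succ j with rfl | ⟨a, rfl⟩
    · exact absurd rfl hj
    simp only [Fin.cases_succ, hQ, mem_setOf_eq] at hx hy
    have hclose : ∀ k : Fin n, |g (x ((k:ℕ):ℤ)) - g (y ((k:ℕ):ℤ))| ≤ 1/(m:ℝ) := by
      intro k
      have hxy : idx (g (x ((k:ℕ):ℤ))) = idx (g (y ((k:ℕ):ℤ))) := by
        have h1 : c x k = c y k := by rw [hx, hy]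
        exact h1
      apply idx_close m hm1 (hg01 _) (hg01 _)
      have := congrArg Fin.val hxy
      exact this
    show (∑ k ∈ Finset.range n, |g (((bernoulliShift A ^ k) x) 0) - g (((bernoulliShift A ^ k) y) 0)|) / (n:ℝ) < ε
    have hterm : ∀ k ∈ Finset.range n,
        |g (((bernoulliShift A ^ k) x) 0) - g (((bernoulliShift A ^ k) y) 0)| ≤ 1/(m:ℝ) := by
      intro k hk
      rw [shift_npow_apply, shift_npow_apply, zero_add]
      exact hclose ⟨k, Finset.mem_range.mp hk⟩
    have hsum : (∑ k ∈ Finset.range n, |g (((bernoulliShift A ^ k) x) 0)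
        - g (((bernoulliShift A ^ k) y) 0)|) ≤ n * (1/(m:ℝ)) := by
      calc _ ≤ (Finset.range n).card • (1/(m:ℝ)) := Finset.sum_le_card_nsmul _ _ _ hterm
        _ = n * (1/(m:ℝ)) := by rw [Finset.card_range, nsmul_eq_mul]
    have hn0 : (0:ℝ) < n := by exact_mod_cast hn
    rw [div_lt_iff₀ hn0]
    calc _ ≤ (n:ℝ) * (1/(m:ℝ)) := hsum
      _ ≤ (n:ℝ) * (ε/2) := by
        apply mul_le_mul_of_nonneg_left hmε (by positivity)
      _ < ε * n := by
        rw [mul_comm]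
        apply mul_lt_mul_of_pos_right _ hn0
        linarith

lemma upper_limsup {A : Type*} [MeasurableSpace A] (μ : Measure (ℤ → A))
    (g : A → ℝ) (hg : Measurable g) (hg01 : ∀ a, g a ∈ Icc (0:ℝ) 1)
    (ε : ℝ) (hε : 0 < ε) :
    Filter.limsup (fun n : ℕ =>
      epsEntropy μ (avgSemimetric (bernoulliShift A) (fun x y => |g (x 0) - g (y 0)|) n) ε
        / ENNReal.ofReal (n : ℝ)) Filter.atTop < ⊤ := by
  classical
  set m := max 1 ⌈2/ε⌉₊ with hmdef
  have hm1 : 1 ≤ m := le_max_left _ _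
  have hL0 : 0 ≤ Real.logb 2 m := Real.logb_nonneg one_lt_two (by exact_mod_cast hm1)
  have hbound : ∀ᶠ n : ℕ in atTop,
      epsEntropy μ (avgSemimetric (bernoulliShift A) (fun x y => |g (x 0) - g (y 0)|) n) ε
        / ENNReal.ofReal (n : ℝ) ≤ ENNReal.ofReal (Real.logb 2 m) := by
    filter_upwards [eventually_ge_atTop 1] with n hn
    have hpart := upper_partition μ g hg hg01 ε hε n hn
    have hex : ∃ k, IsEntropyPartition μ
        (avgSemimetric (bernoulliShift A) (fun x y => |g (x 0) - g (y 0)|) n) ε k := ⟨m^n, hpart⟩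
    have hent : epsEntropy μ (avgSemimetric (bernoulliShift A)
        (fun x y => |g (x 0) - g (y 0)|) n) ε ≤ ENNReal.ofReal ((n:ℝ) * Real.logb 2 m) := by
      rw [epsEntropy, dif_pos hex]
      apply ENNReal.ofReal_le_ofReal
      have hfind : Nat.find hex ≤ m ^ n := Nat.find_le hpart
      have hlog : Real.logb 2 (Nat.find hex) ≤ Real.logb 2 ((m:ℝ)^n) := by
        rcases Nat.eq_zero_or_pos (Nat.find hex) with h0 | h0
        · rw [h0]
          simp only [Nat.cast_zero, Real.logb_zero]
          apply Real.logb_nonneg one_lt_two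
          have : (1:ℕ) ≤ m ^ n := Nat.one_le_pow _ _ hm1
          exact_mod_cast this
        · have : ((Nat.find hex : ℕ) : ℝ) ≤ ((m^n : ℕ) : ℝ) := by exact_mod_cast hfind
          push_cast at this
          exact Real.logb_le_logb_of_le one_lt_two (by exact_mod_cast h0) this
      calc Real.logb 2 (Nat.find hex) ≤ Real.logb 2 ((m:ℝ)^n) := hlog
        _ = (n:ℝ) * Real.logb 2 m := Real.logb_pow 2 (m:ℝ) n
    have hn0 : ENNReal.ofReal (n:ℝ) ≠ 0 := by
      rw [Ne, ENNReal.ofReal_eq_zero, not_le]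
      exact_mod_cast hn
    calc _ ≤ ENNReal.ofReal ((n:ℝ) * Real.logb 2 m) / ENNReal.ofReal (n:ℝ) :=
        ENNReal.div_le_div_right hent _
      _ = ENNReal.ofReal (Real.logb 2 m) := by
        rw [ENNReal.ofReal_mul (by positivity)]
        rw [mul_comm, mul_div_assoc, ENNReal.div_self hn0 ENNReal.ofReal_ne_top, mul_one]
  exact lt_of_le_of_lt (limsup_le_of_le (by isBoundedDefault) hbound) ENNReal.ofReal_lt_top

lemma ennreal_numeric (n q : ℕ) (hq : n + (n + 2) ≤ 4 * q) :
    (2:ℝ≥0∞)^n * (1/16 : ℝ≥0∞)^q ≤ (2:ℝ≥0∞)⁻¹^(n+2) := by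
  have h16 : (1/16 : ℝ≥0∞) = (2:ℝ≥0∞)⁻¹^4 := by
    rw [← ENNReal.inv_pow]
    norm_num
  rw [h16, ← pow_mul]
  have h1 : (2:ℝ≥0∞)⁻¹^(4*q) ≤ (2:ℝ≥0∞)⁻¹^(n+(n+2)) :=
    pow_le_pow_right_of_le_one' (ENNReal.inv_le_one.2 ENNReal.one_lt_two.le) hq
  calc (2:ℝ≥0∞)^n * (2:ℝ≥0∞)⁻¹^(4*q) ≤ (2:ℝ≥0∞)^n * (2:ℝ≥0∞)⁻¹^(n+(n+2)) :=
      mul_le_mul_right h1 _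
    _ = ((2:ℝ≥0∞) * 2⁻¹)^n * (2:ℝ≥0∞)⁻¹^(n+2) := by
      rw [pow_add, ← mul_assoc, mul_pow]
    _ = (2:ℝ≥0∞)⁻¹^(n+2) := by
      rw [ENNReal.mul_inv_cancel two_ne_zero ENNReal.ofNat_ne_top, one_pow, one_mul]

lemma lower_diam {A : Type*} [MeasurableSpace A]
    (ν : Measure A) [IsProbabilityMeasure ν]
    (μ : Measure (ℤ → A)) [IsProbabilityMeasure μ]
    (hμ : ∀ s : Finset ℤ, Measure.map (fun x (i : s) => x i) μ = Measure.pi fun _ : s => ν)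
    (g : A → ℝ) (hg : Measurable g) (hg01 : ∀ a, g a ∈ Icc (0:ℝ) 1)
    (δ : ℝ) (hδ : ∀ t ∈ Icc (0:ℝ) 1, (ν.map g) (Icc (t - δ) (t + δ)) ≤ 1/16)
    (ε : ℝ) (hε : 0 < ε) (hεδ : 2*ε ≤ δ)
    (n : ℕ) (hn : 1 ≤ n) (S : Set (ℤ → A))
    (hS : ∀ x ∈ S, ∀ y ∈ S,
      avgSemimetric (bernoulliShift A) (fun x y => |g (x 0) - g (y 0)|) n x y < ε) :
    μ S ≤ (2:ℝ≥0∞)⁻¹^(n+2) := by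
  classical
  rcases S.eq_empty_or_nonempty with rfl | ⟨y, hy⟩
  · simp
  set d : (ℤ → A) → ℕ → ℝ := fun x k => |g (x ((k:ℕ):ℤ)) - g (y ((k:ℕ):ℤ))| with hd
  set 𝒦 : Finset (Finset ℕ) := (Finset.range n).powerset.filter (fun K => n < 2 * K.card)
    with h𝒦
  set Bset : ℤ → Set A := fun i => g ⁻¹' (Icc (g (y i) - δ) (g (y i) + δ)) with hB
  set C : Finset ℕ → Set (ℤ → A) :=
    fun K => {x | ∀ j ∈ K.image (fun k : ℕ => (k:ℤ)), x j ∈ Bset j} with hC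
  have hcover : S ⊆ ⋃ K ∈ 𝒦, C K := by
    intro x hx
    have hav := hS x hx y hy
    have hav' : (∑ k ∈ Finset.range n, d x k) / (n:ℝ) < ε := by
      have : ∀ k ∈ Finset.range n,
          |g (((bernoulliShift A ^ k) x) 0) - g (((bernoulliShift A ^ k) y) 0)| = d x k := by
        intro k _
        rw [shift_npow_apply, shift_npow_apply, zero_add]
      rw [avgSemimetric] at hav
      rwa [Finset.sum_congr rfl this] at hav
    have hn0 : (0:ℝ) < n := by exact_mod_cast hn
    rw [div_lt_iff₀ hn0] at hav'
    set far := (Finset.range n).filter (fun k => 2*ε ≤ d x k) with hfar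
    have hfarsum : (far.card : ℝ) * (2*ε) ≤ ∑ k ∈ Finset.range n, d x k := by
      calc (far.card : ℝ) * (2*ε) = far.card • (2*ε) := by rw [nsmul_eq_mul]
        _ ≤ ∑ k ∈ far, d x k :=
          Finset.card_nsmul_le_sum _ _ _ (fun k hk => (Finset.mem_filter.mp hk).2)
        _ ≤ ∑ k ∈ Finset.range n, d x k :=
          Finset.sum_le_sum_of_subset_of_nonneg (Finset.filter_subset _ _)
            (fun k _ _ => abs_nonneg _)
    have hfarcard : 2 * far.card < n := by
      have h1 : (far.card : ℝ) * (2*ε) < (ε * n) := lt_of_le_of_lt hfarsum hav'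
      have h2 : (2 * far.card : ℝ) < n := by
        rw [mul_comm] at h1
        have := (mul_lt_mul_iff_right₀ hε).mp (by linarith [h1] : ε * ((far.card:ℝ) * 2) < ε * n)
        linarith
      exact_mod_cast h2
    set near := (Finset.range n).filter (fun k => ¬ (2*ε ≤ d x k)) with hnear
    have hcards : far.card + near.card = n := by
      rw [hfar, hnear, Finset.card_filter_add_card_filter_not, Finset.card_range]
    refine mem_iUnion.mpr ⟨near, mem_iUnion.mpr ⟨?_, ?_⟩⟩
    · rw [h𝒦, Finset.mem_filter, Finset.mem_powerset]
      exact ⟨Finset.filter_subset _ _, by omega⟩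
    · rw [hC]
      intro j hj
      obtain ⟨k, hk, rfl⟩ := Finset.mem_image.mp hj
      have hdk : d x k < 2*ε := by
        have := (Finset.mem_filter.mp hk).2
        linarith [not_le.mp this]
      rw [hB]
      simp only [mem_preimage, mem_Icc]
      rw [hd] at hdk
      rw [abs_sub_lt_iff] at hdk
      constructor <;> linarith [hdk.1, hdk.2]
  have hCmeasure : ∀ K ∈ 𝒦, μ (C K) ≤ (1/16 : ℝ≥0∞)^(n/2 + 1) := by
    intro K hK
    rw [h𝒦, Finset.mem_filter, Finset.mem_powerset] at hK
    have hBmeas : ∀ i, MeasurableSet (Bset i) := fun i => hg measurableSet_Icc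
    have h1 : μ (C K) = ∏ j ∈ K.image (fun k : ℕ => (k:ℤ)), ν (Bset j) :=
      cylinder_measure ν μ hμ _ Bset hBmeas
    have h2 : ∀ j ∈ K.image (fun k : ℕ => (k:ℤ)), ν (Bset j) ≤ (1/16 : ℝ≥0∞) := by
      intro j _
      rw [hB]
      have : ν (g ⁻¹' (Icc (g (y j) - δ) (g (y j) + δ)))
          = (ν.map g) (Icc (g (y j) - δ) (g (y j) + δ)) := by
        rw [Measure.map_apply hg measurableSet_Icc]
      rw [this]
      exact hδ _ (hg01 _)
    have hcard : (K.image (fun k : ℕ => (k:ℤ))).card = K.card :=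
      Finset.card_image_of_injective _ (fun a b h => by exact_mod_cast h)
    calc μ (C K) = ∏ j ∈ K.image (fun k : ℕ => (k:ℤ)), ν (Bset j) := h1
      _ ≤ ∏ _j ∈ K.image (fun k : ℕ => (k:ℤ)), (1/16 : ℝ≥0∞) := Finset.prod_le_prod' h2
      _ = (1/16 : ℝ≥0∞)^(K.card) := by rw [Finset.prod_const, hcard]
      _ ≤ (1/16 : ℝ≥0∞)^(n/2 + 1) := by
        apply pow_le_pow_right_of_le_one' (by norm_num : (1/16 : ℝ≥0∞) ≤ 1)
        omega
  calc μ S ≤ μ (⋃ K ∈ 𝒦, C K) := measure_mono hcover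
    _ ≤ ∑ K ∈ 𝒦, μ (C K) := measure_biUnion_finset_le _ _
    _ ≤ 𝒦.card • (1/16 : ℝ≥0∞)^(n/2 + 1) := Finset.sum_le_card_nsmul _ _ _ hCmeasure
    _ ≤ (2^n : ℕ) • (1/16 : ℝ≥0∞)^(n/2 + 1) := by
      apply smul_le_smul_of_nonneg_right ?_ zero_le
      calc 𝒦.card ≤ (Finset.range n).powerset.card := Finset.card_filter_le _ _
        _ = 2^n := by rw [Finset.card_powerset, Finset.card_range]
    _ = (2:ℝ≥0∞)^n * (1/16 : ℝ≥0∞)^(n/2 + 1) := by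
      rw [nsmul_eq_mul]
      push_cast
      ring
    _ ≤ (2:ℝ≥0∞)⁻¹^(n+2) := ennreal_numeric n (n/2+1) (by omega)

lemma lower_liminf {A : Type*} [MeasurableSpace A]
    (ν : Measure A) [IsProbabilityMeasure ν]
    (μ : Measure (ℤ → A)) [IsProbabilityMeasure μ]
    (hμ : ∀ s : Finset ℤ, Measure.map (fun x (i : s) => x i) μ = Measure.pi fun _ : s => ν)
    (g : A → ℝ) (hg : Measurable g) (hg01 : ∀ a, g a ∈ Icc (0:ℝ) 1)
    (δ : ℝ) (hδ : ∀ t ∈ Icc (0:ℝ) 1, (ν.map g) (Icc (t - δ) (t + δ)) ≤ 1/16)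
    (ε : ℝ) (hε : 0 < ε) (hεδ : 2*ε ≤ δ) (hε2 : ε ≤ 1/2)
    (n : ℕ) (hn : 1 ≤ n) :
    (1:ℝ≥0∞) ≤ epsEntropy μ
      (avgSemimetric (bernoulliShift A) (fun x y => |g (x 0) - g (y 0)|) n) ε
      / ENNReal.ofReal (n : ℝ) := by
  classical
  have hofn_ne_top : ENNReal.ofReal (n:ℝ) ≠ ⊤ := ENNReal.ofReal_ne_top
  have hofn_ne_zero : ENNReal.ofReal (n:ℝ) ≠ 0 := by
    rw [Ne, ENNReal.ofReal_eq_zero, not_le]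
    exact_mod_cast hn
  rw [epsEntropy]
  split_ifs with hex
  · -- a partition exists; show Nat.find hex is large
    set k := Nat.find hex with hk
    obtain ⟨P, hPmeas, hPdisj, hPunion, hP0, hPdiam⟩ := Nat.find_spec hex
    have hklarge : ((2:ℝ≥0∞))^(n+1) ≤ (k:ℝ≥0∞) := by
      have h1 : (1:ℝ≥0∞) = μ univ := (measure_univ).symm
      have h2 : μ univ ≤ ∑ j : Fin (k+1), μ (P j) := by
        rw [← hPunion]
        exact measure_iUnion_fintype_le μ P
      have h3 : ∑ j : Fin (k+1), μ (P j)
          = (∑ j ∈ Finset.univ.erase 0, μ (P j)) + μ (P 0) := by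
        rw [Finset.sum_erase_add]
        exact Finset.mem_univ 0
      have h4 : ∀ j ∈ Finset.univ.erase (0 : Fin (k+1)), μ (P j) ≤ (2:ℝ≥0∞)⁻¹^(n+2) := by
        intro j hj
        have hjne : j ≠ 0 := (Finset.mem_erase.mp hj).1
        exact lower_diam ν μ hμ g hg hg01 δ hδ ε hε hεδ n hn (P j) (hPdiam j hjne)
      have h5 : (∑ j ∈ Finset.univ.erase 0, μ (P j)) ≤ k * (2:ℝ≥0∞)⁻¹^(n+2) := by
        calc _ ≤ (Finset.univ.erase (0 : Fin (k+1))).card • (2:ℝ≥0∞)⁻¹^(n+2) :=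
            Finset.sum_le_card_nsmul _ _ _ h4
          _ = k * (2:ℝ≥0∞)⁻¹^(n+2) := by
            rw [Finset.card_erase_of_mem (Finset.mem_univ 0), Finset.card_univ,
              Fintype.card_fin, nsmul_eq_mul]
            norm_num
      have hεhalf : μ (P 0) ≤ (2:ℝ≥0∞)⁻¹ := by
        apply le_trans hP0.le
        calc ENNReal.ofReal ε ≤ ENNReal.ofReal (1/2) := ENNReal.ofReal_le_ofReal hε2
          _ = (2:ℝ≥0∞)⁻¹ := by
            rw [one_div, ENNReal.ofReal_inv_of_pos (by norm_num : (0:ℝ) < 2)]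
            norm_num
      have hhalf : (2:ℝ≥0∞)⁻¹ ≤ (k:ℝ≥0∞) * (2:ℝ≥0∞)⁻¹^(n+2) := by
        by_contra hlt
        push_neg at hlt
        have : (1:ℝ≥0∞) < 1 := by
          calc (1:ℝ≥0∞) ≤ ∑ j : Fin (k+1), μ (P j) := h1.le.trans h2
            _ = (∑ j ∈ Finset.univ.erase 0, μ (P j)) + μ (P 0) := h3
            _ ≤ (k:ℝ≥0∞) * (2:ℝ≥0∞)⁻¹^(n+2) + μ (P 0) := add_le_add_left h5 _
            _ < (2:ℝ≥0∞)⁻¹ + (2:ℝ≥0∞)⁻¹ :=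
              ENNReal.add_lt_add_of_lt_of_le (by simp) hlt hεhalf
            _ = 1 := ENNReal.inv_two_add_inv_two
        exact absurd this (lt_irrefl _)
      have hstep : (2:ℝ≥0∞)^(n+1) = (2:ℝ≥0∞)⁻¹ * (2:ℝ≥0∞)^(n+2) := by
        have h' : (2:ℝ≥0∞)⁻¹ * (2:ℝ≥0∞)^(n+2) = ((2:ℝ≥0∞)⁻¹ * 2) * 2^(n+1) := by
          rw [pow_succ' (2:ℝ≥0∞) (n+1), ← mul_assoc]
        rw [h', ENNReal.inv_mul_cancel two_ne_zero ENNReal.ofNat_ne_top, one_mul]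
      calc (2:ℝ≥0∞)^(n+1) = (2:ℝ≥0∞)⁻¹ * (2:ℝ≥0∞)^(n+2) := hstep
        _ ≤ ((k:ℝ≥0∞) * (2:ℝ≥0∞)⁻¹^(n+2)) * (2:ℝ≥0∞)^(n+2) :=
          mul_le_mul_left hhalf _
        _ = (k:ℝ≥0∞) := by
          rw [mul_assoc, ← mul_pow, ENNReal.inv_mul_cancel two_ne_zero ENNReal.ofNat_ne_top,
            one_pow, mul_one]
    -- convert to natural number bound and then to logb
    have hknat : 2^(n+1) ≤ k := by
      have : ((2^(n+1) : ℕ) : ℝ≥0∞) ≤ (k:ℝ≥0∞) := by push_cast; exact hklarge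
      exact_mod_cast this
    have hlogb : (n:ℝ) ≤ Real.logb 2 k := by
      have h1 : Real.logb 2 ((2:ℝ)^(n+1)) ≤ Real.logb 2 k := by
        apply Real.logb_le_logb_of_le one_lt_two (by positivity)
        have : ((2^(n+1) : ℕ) : ℝ) ≤ (k : ℝ) := by exact_mod_cast hknat
        push_cast at this
        exact this
      rw [Real.logb_pow, Real.logb_self_eq_one (by norm_num), mul_one] at h1
      have : (n:ℝ) ≤ (n:ℝ) + 1 := by linarith
      exact le_trans (by exact_mod_cast this) h1
    calc (1:ℝ≥0∞) = ENNReal.ofReal (n:ℝ) / ENNReal.ofReal (n:ℝ) :=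
        (ENNReal.div_self hofn_ne_zero hofn_ne_top).symm
      _ ≤ ENNReal.ofReal (Real.logb 2 k) / ENNReal.ofReal (n:ℝ) :=
        ENNReal.div_le_div_right (ENNReal.ofReal_le_ofReal hlogb) _
  · rw [ENNReal.top_div_of_ne_top hofn_ne_top]
    exact le_top

/-- Let `ν` be a probability measure without atoms on a standard space `A`, and
let `μ = ν^ℤ` be the product measure on `X = A^ℤ` (characterized by its finite-dimensional
marginals). Then `h_n = n` is a scaling entropy sequence of the Bernoulli shift `(X, μ, T)`. -/
theorem isScalingEntropySeq_id_bernoulli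
    {A : Type*} [MeasurableSpace A] [StandardBorelSpace A]
    (ν : Measure A) [IsProbabilityMeasure ν] (hν : ∀ a : A, ν {a} = 0)
    (μ : Measure (ℤ → A)) [IsProbabilityMeasure μ]
    (hμ : ∀ s : Finset ℤ, Measure.map (fun x (i : s) => x i) μ = Measure.pi fun _ : s => ν) :
    IsScalingEntropySeq μ (bernoulliShift A) (fun n => (n : ℝ)) := by
  classical
  haveI : NullSingletonClass ν := ⟨hν⟩
  have hAunc : ¬Countable A := by
    intro hc
    have : ν (univ : Set A) = 0 := (Set.to_countable (univ : Set A)).measure_zero ν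
    simp [measure_univ] at this
  have hIunc : ¬Countable ↥(Icc (0:ℝ) 1) := by
    intro hc
    have h1 := Cardinal.mk_Icc_real (by norm_num : (0:ℝ) < 1)
    have h2 : Cardinal.mk ↥(Icc (0:ℝ) 1) ≤ Cardinal.aleph0 := Cardinal.mk_le_aleph0
    rw [h1] at h2
    exact absurd h2 (not_le.mpr (Cardinal.aleph0_lt_continuum))
  haveI : StandardBorelSpace ↥(Icc (0:ℝ) 1) := (measurableSet_Icc).standardBorel
  obtain ⟨e⟩ : Nonempty (A ≃ᵐ ↥(Icc (0:ℝ) 1)) :=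
    ⟨PolishSpace.measurableEquivOfNotCountable hAunc hIunc⟩
  set g : A → ℝ := fun a => ((e a : ℝ)) with hgdef
  have hg : Measurable g := measurable_subtype_coe.comp e.measurable
  have hg01 : ∀ a, g a ∈ Icc (0:ℝ) 1 := fun a => (e a).2
  have hginj : Function.Injective g := Subtype.val_injective.comp e.injective
  refine ⟨fun x y => |g (x 0) - g (y 0)|, ?_, ?_, ?_, ?_, ?_, ?_⟩
  · -- semimetric
    constructor
    · intro x; simp
    · intro x y; exact abs_sub_comm _ _
    · intro x y; exact abs_nonneg _
    · intro x y z; exact abs_sub_le _ _ _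
  · -- measurable
    exact Measurable.abs
      ((hg.comp ((measurable_pi_apply 0).comp measurable_fst)).sub
        (hg.comp ((measurable_pi_apply 0).comp measurable_snd)))
  · -- integrable
    have hmeas : Measurable (fun p : (ℤ → A) × (ℤ → A) => |g (p.1 0) - g (p.2 0)|) :=
      Measurable.abs
        ((hg.comp ((measurable_pi_apply 0).comp measurable_fst)).sub
          (hg.comp ((measurable_pi_apply 0).comp measurable_snd)))
    refine (integrable_const (1:ℝ)).mono' hmeas.aestronglyMeasurable (ae_of_all _ fun p => ?_)
    rw [Real.norm_eq_abs, abs_abs]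
    have h1 := hg01 (p.1 0); have h2 := hg01 (p.2 0)
    rw [mem_Icc] at h1 h2
    rw [abs_sub_le_iff]
    constructor <;> linarith
  · -- admissible
    refine ⟨univ, MeasurableSet.univ, by simp, ?_⟩
    set clamp : ℚ → ℝ := fun q => max 0 (min 1 (q:ℝ)) with hclamp
    have hclamp01 : ∀ q, clamp q ∈ Icc (0:ℝ) 1 := fun q =>
      ⟨le_max_left _ _, max_le (by norm_num) (min_le_left _ _)⟩
    set c : ℚ → (ℤ → A) := fun q => (fun _ => e.symm ⟨clamp q, hclamp01 q⟩) with hc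
    refine ⟨Set.range c, countable_range c, subset_univ _, fun x _ ε hε => ?_⟩
    set t := g (x 0) with ht
    obtain ⟨q, hq1, hq2⟩ := exists_rat_btwn (by linarith : t - ε < t)
    refine ⟨c q, mem_range_self q, ?_⟩
    have hgc : g (c q 0) = clamp q := by
      show ((e (e.symm ⟨clamp q, hclamp01 q⟩)) : ℝ) = clamp q
      rw [e.apply_symm_apply]
    show |g (x 0) - g (c q 0)| < ε
    rw [hgc, ← ht]
    have ht01 := hg01 (x 0)
    rw [mem_Icc] at ht01
    rw [← ht] at ht01
    rw [abs_sub_lt_iff]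
    have hq3 : (q:ℝ) < 1 := lt_of_lt_of_le hq2 ht01.2
    have hcq : clamp q = max 0 (q:ℝ) := by
      show max 0 (min 1 (q:ℝ)) = max 0 (q:ℝ)
      rw [min_eq_right hq3.le]
    rw [hcq]
    constructor
    · rcases le_total (q:ℝ) 0 with h0 | h0
      · rw [max_eq_left h0]; linarith
      · rw [max_eq_right h0]; linarith
    · rcases le_total (q:ℝ) 0 with h0 | h0
      · rw [max_eq_left h0]; linarith
      · rw [max_eq_right h0]; linarith
  · -- generating
    refine ⟨univ, MeasurableSet.univ, by simp, fun x _ y _ hxy => ?_⟩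
    have : ∃ k : ℤ, x k ≠ y k := by
      by_contra hc; push_neg at hc; exact hxy (funext hc)
    obtain ⟨k, hk⟩ := this
    refine ⟨k, ?_⟩
    show 0 < |g (((bernoulliShift A ^ k) x) 0) - g (((bernoulliShift A ^ k) y) 0)|
    simp only [shift_zpow_apply, zero_add]
    rw [abs_pos, sub_ne_zero]
    exact fun h => hk (hginj h)
  · -- scaling sequence
    refine ⟨fun n hn => by show (0:ℝ) < n; exact_mod_cast hn, ?_, ?_⟩
    · intro ε hε
      exact upper_limsup μ g hg hg01 ε hε
    · -- liminf
      haveI : IsProbabilityMeasure (ν.map g) := Measure.isProbabilityMeasure_map hg.aemeasurable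
      haveI : NullSingletonClass (ν.map g) := by
        constructor
        intro t
        rw [Measure.map_apply hg (measurableSet_singleton t)]
        have hsub : (g ⁻¹' {t}).Subsingleton := by
          intro a ha b hb
          exact hginj (ha.trans hb.symm)
        exact hsub.measure_zero ν
      obtain ⟨δ, hδpos, hδ⟩ := small_balls (ν.map g)
      refine ⟨min (δ/2) (1/2), by positivity, fun ε hε hεlt => ?_⟩
      have hεδ : 2*ε ≤ δ := by
        have := lt_of_lt_of_le hεlt (min_le_left _ _)
        linarith
      have hε2 : ε ≤ 1/2 := by
        have := lt_of_lt_of_le hεlt (min_le_right _ _)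
        linarith
      have hbound : ∀ᶠ n : ℕ in atTop, (1:ℝ≥0∞) ≤
          epsEntropy μ (avgSemimetric (bernoulliShift A)
            (fun x y => |g (x 0) - g (y 0)|) n) ε / ENNReal.ofReal (n : ℝ) := by
        filter_upwards [eventually_ge_atTop 1] with n hn
        exact lower_liminf ν μ hμ g hg hg01 δ hδ ε hε hεδ hε2 n hn
      exact lt_of_lt_of_le zero_lt_one (le_liminf_of_le (by isBoundedDefault) hbound)
end
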